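/- Let T be an infinite rooted tree. If ψ : T → ℂ satisfies ‖ψf‖_n = ‖f‖_m for all f ∈ L^(m) (any natural numbers m, n), then ψ is a unimodular constant: ψ'(v) = 0 for all v ≠ o and |ψ(o)| = 1. -/

import Mathlib

open Real Filter

/-- Iterated logarithm: ℓ₀(x) = x, ℓ_{j+1}(x) = 1 + log ℓ_j(x). -/
noncomputable def ell : ℕ → ℝ → ℝ
  | 0, x => x
  | j + 1, x => 1 + Real.log (ell j x)

/-- Λ_k(x) = ∏_{j=0}^{k-1} ℓ_j(x). -/
noncomputable def Lam (k : ℕ) (x : ℝ) : ℝ := ∏ j ∈ Finset.range k, ell j x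

/-- Discrete derivative of f on a rooted tree given by a parent map:
`f v - f (parent v)` (automatically 0 at the root since `parent o = o`). -/
def Der {V : Type*} (parent : V → V) (f : V → ℂ) (v : V) : ℂ := f v - f (parent v)

/-- The set of values |f'(v)|·Λ_k(|v|) over v ≠ o; f ∈ L^(k) iff this set is bounded above. -/
def lipSet {V : Type*} (o : V) (parent : V → V) (depth : V → ℕ) (k : ℕ) (f : V → ℂ) : Set ℝ :=
  {r | ∃ v, v ≠ o ∧ r = ‖Der parent f v‖ * Lam k (depth v)}

/-- ‖f‖_k = |f(o)| + sup_{v ≠ o} |f'(v)|·Λ_k(|v|). -/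
noncomputable def lipNorm {V : Type*} (o : V) (parent : V → V) (depth : V → ℕ) (k : ℕ)
    (f : V → ℂ) : ℝ :=
  ‖f o‖ + sSup (lipSet o parent depth k f)

/-! Test the isometry on the indicator of the root and on the constant `1`. The first has norm
`2‖c‖` in every `L^(k)` and `ψ` multiplies it by `ψ o`, so `|ψ(o)| = 1`. The second has norm `1`,
so `‖ψ‖_n = 1 = |ψ(o)|`: the supremum of `|ψ'(v)| Λ_n(|v|)` vanishes, and `Λ_n ≥ 1` off the root. -/

lemma one_le_ell (j : ℕ) {x : ℝ} (hx : 1 ≤ x) : 1 ≤ ell j x := by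
  induction j with
  | zero => exact hx
  | succ j ih => simpa [ell] using Real.log_nonneg ih

lemma one_le_Lam (k : ℕ) {x : ℝ} (hx : 1 ≤ x) : 1 ≤ Lam k x :=
  Finset.one_le_prod fun j _ => one_le_ell j hx

lemma ell_one (j : ℕ) : ell j 1 = 1 := by
  induction j with
  | zero => rfl
  | succ j ih => simp [ell, ih]

lemma Lam_one (k : ℕ) : Lam k 1 = 1 := by
  simp [Lam, ell_one]

section RootedTree

variable {V : Type*} (o : V) (parent : V → V) (depth : V → ℕ)

lemma lipNorm_eq_of_isGreatest {k : ℕ} {f : V → ℂ} {a : ℝ}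
    (h : IsGreatest (lipSet o parent depth k f) a) :
    lipNorm o parent depth k f = ‖f o‖ + a := by
  rw [lipNorm, h.csSup_eq]

lemma isGreatest_lipSet_const {w : V} (hw : w ≠ o) (k : ℕ) (c : ℂ) :
    IsGreatest (lipSet o parent depth k fun _ => c) 0 := by
  refine ⟨⟨w, hw, by simp [Der]⟩, ?_⟩
  rintro r ⟨v, -, rfl⟩
  simp [Der]

variable {o parent depth}

lemma one_le_Lam_depth (hdepth : ∀ v, v ≠ o → depth v = depth (parent v) + 1)
    (k : ℕ) {v : V} (hv : v ≠ o) : 1 ≤ Lam k (depth v) :=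
  one_le_Lam k (Nat.one_le_cast.mpr (by rw [hdepth v hv]; omega))

lemma isGreatest_lipSet_indicator_root (hdepth0 : depth o = 0)
    (hdepth : ∀ v, v ≠ o → depth v = depth (parent v) + 1)
    {w : V} (hw : w ≠ o) (hwo : parent w = o) (k : ℕ) (c : ℂ) :
    IsGreatest (lipSet o parent depth k (({o} : Set V).indicator fun _ => c)) ‖c‖ := by
  have depth_child : ∀ v, v ≠ o → parent v = o → depth v = 1 := fun v hv hp => by
    rw [hdepth v hv, hp, hdepth0]
  refine ⟨⟨w, hw, by simp [Der, hw, hwo, depth_child w hw hwo, Lam_one]⟩, ?_⟩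
  rintro r ⟨v, hv, rfl⟩
  by_cases hp : parent v = o
  · simp [Der, hv, hp, depth_child v hv hp, Lam_one]
  · simp [Der, hv, hp]

lemma lipNorm_indicator_root (hdepth0 : depth o = 0)
    (hdepth : ∀ v, v ≠ o → depth v = depth (parent v) + 1)
    {w : V} (hw : w ≠ o) (hwo : parent w = o) (k : ℕ) (c : ℂ) :
    lipNorm o parent depth k (({o} : Set V).indicator fun _ => c) = 2 * ‖c‖ := by
  rw [lipNorm_eq_of_isGreatest _ _ _
    (isGreatest_lipSet_indicator_root hdepth0 hdepth hw hwo k c)]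
  simp only [Set.indicator_of_mem (Set.mem_singleton o)]
  ring

lemma mul_indicator_root (ψ : V → ℂ) (c : ℂ) :
    (fun v => ψ v * ({o} : Set V).indicator (fun _ => c) v)
      = ({o} : Set V).indicator fun _ => ψ o * c := by
  funext v
  by_cases hv : v = o <;> simp [hv]

lemma der_eq_zero_of_sSup_lipSet_le_zero
    (hdepth : ∀ v, v ≠ o → depth v = depth (parent v) + 1) {k : ℕ} {f : V → ℂ}
    (hbdd : BddAbove (lipSet o parent depth k f)) (hsup : sSup (lipSet o parent depth k f) ≤ 0)
    {v : V} (hv : v ≠ o) : Der parent f v = 0 := by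
  have hle : ‖Der parent f v‖ * Lam k (depth v) ≤ 0 :=
    (le_csSup hbdd ⟨v, hv, rfl⟩).trans hsup
  have hLam := one_le_Lam_depth hdepth k hv
  exact norm_eq_zero.mp (by nlinarith [norm_nonneg (Der parent f v)])

end RootedTree

theorem isometry_implies_unimodular_general {V : Type*} (o : V) (parent : V → V) (depth : V → ℕ)
    (hdepth0 : depth o = 0)
    (hdepth : ∀ v, v ≠ o → depth v = depth (parent v) + 1)
    (hchild : ∀ v, ∃ w, w ≠ o ∧ parent w = v)
    (ψ : V → ℂ) (m n : ℕ)
    (hiso : ∀ f : V → ℂ, BddAbove (lipSet o parent depth m f) →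
      BddAbove (lipSet o parent depth n (fun v => ψ v * f v)) ∧
      lipNorm o parent depth n (fun v => ψ v * f v) = lipNorm o parent depth m f) :
    (∀ v, v ≠ o → Der parent ψ v = 0) ∧ ‖ψ o‖ = 1 := by
  obtain ⟨w, hw, hwo⟩ := hchild o
  have bump := isGreatest_lipSet_indicator_root hdepth0 hdepth hw hwo
  have const := isGreatest_lipSet_const o parent depth hw m 1
  have hψo : ‖ψ o‖ = 1 := by
    have h := (hiso _ (bump m 1).bddAbove).2
    rw [mul_indicator_root, lipNorm_indicator_root hdepth0 hdepth hw hwo,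
      lipNorm_indicator_root hdepth0 hdepth hw hwo] at h
    simpa using h
  obtain ⟨hbdd, hnorm⟩ := hiso _ const.bddAbove
  simp only [mul_one] at hbdd hnorm
  have hsup : sSup (lipSet o parent depth n ψ) ≤ 0 := by
    rw [lipNorm_eq_of_isGreatest _ _ _ const, lipNorm, hψo] at hnorm
    simp only [norm_one] at hnorm
    linarith
  exact ⟨fun v hv => der_eq_zero_of_sSup_lipSet_le_zero hdepth hbdd hsup hv, hψo⟩

/-- If M_ψ : L^(m) → L^(n) is an isometry then ψ is a unimodular constant:
ψ'(v) = 0 for all v ≠ o and |ψ(o)| = 1. -/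
theorem isometry_implies_unimodular {V : Type*} (o : V) (parent : V → V) (depth : V → ℕ)
    (hpar : parent o = o) (hdepth0 : depth o = 0)
    (hdepth : ∀ v, v ≠ o → depth v = depth (parent v) + 1)
    (hchild : ∀ v, ∃ w, w ≠ o ∧ parent w = v)
    (ψ : V → ℂ) (m n : ℕ)
    (hiso : ∀ f : V → ℂ, BddAbove (lipSet o parent depth m f) →
      BddAbove (lipSet o parent depth n (fun v => ψ v * f v)) ∧
      lipNorm o parent depth n (fun v => ψ v * f v) = lipNorm o parent depth m f) :
    (∀ v, v ≠ o → Der parent ψ v = 0) ∧ ‖ψ o‖ = 1 :=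
  isometry_implies_unimodular_general o parent depth hdepth0 hdepth hchild ψ m n hiso
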